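/- Let 0 ≤ λ < γ ≤ δ be real numbers. Let f = s + conj(t) ∈ H⁰ with s(z) = z + Σ_{m≥2} a_m z^m and t(z) = Σ_{m≥2} b_m z^m. If Σ_{m≥2} m²[2γ + (δ−γ)(m−1)](|a_m| + |b_m|) ≤ 2(γ−λ), then f belongs to the class R_H⁰(γ,δ,λ). -/

import Mathlib

open Complex Metric Set ComplexConjugate

/-- The third-order differential operator γ g'(z) + δ z g''(z) + ((δ-γ)/2) z² g'''(z). -/
noncomputable def dop (γ δ : ℝ) (g : ℂ → ℂ) (z : ℂ) : ℂ :=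
  (γ : ℂ) * deriv g z + (δ : ℂ) * z * iteratedDeriv 2 g z +
    (((δ : ℂ) - (γ : ℂ)) / 2) * z ^ 2 * iteratedDeriv 3 g z

/-- Membership in H⁰ : s, t analytic on the unit disk, s(0)=0, s'(0)=1, t(0)=0, t'(0)=0. -/
def MemH0 (s t : ℂ → ℂ) : Prop :=
  AnalyticOnNhd ℂ s (ball 0 1) ∧ AnalyticOnNhd ℂ t (ball 0 1) ∧
    s 0 = 0 ∧ deriv s 0 = 1 ∧ t 0 = 0 ∧ deriv t 0 = 0

/-- The class R_H⁰(γ,δ,λ). -/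
noncomputable def MemRH0 (γ δ lam : ℝ) (s t : ℂ → ℂ) : Prop :=
  MemH0 s t ∧
    ∀ z ∈ ball (0 : ℂ) 1, ‖dop γ δ t z‖ < (dop γ δ s z - (lam : ℂ)).re

/-- The class R(γ,δ,λ) of analytic functions. -/
noncomputable def MemR (γ δ lam : ℝ) (F : ℂ → ℂ) : Prop :=
  AnalyticOnNhd ℂ F (ball 0 1) ∧ F 0 = 0 ∧ deriv F 0 = 1 ∧
    ∀ z ∈ ball (0 : ℂ) 1, lam < (dop γ δ F z).re


lemma summable_aux (j : ℕ) {r : ℝ} (h0 : 0 ≤ r) (h1 : r < 1) :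
    Summable (fun n : ℕ => ((n : ℝ) + 1) ^ j * r ^ n) := by
  have h2 : Summable (fun n : ℕ => (2:ℝ)^j * ((n:ℝ)^j * r^n) + (2:ℝ)^j * r^n) :=
    ((summable_pow_mul_geometric_of_norm_lt_one (R := ℝ) j
        (by rwa [Real.norm_of_nonneg h0])).mul_left _).add
      ((summable_geometric_of_lt_one h0 h1).mul_left _)
  refine h2.of_nonneg_of_le (fun n => by positivity) (fun n => ?_)
  have hrn : (0:ℝ) ≤ r ^ n := by positivity
  have hb : ((n:ℝ)+1)^j ≤ 2^j * (n:ℝ)^j + 2^j := by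
    rcases Nat.eq_zero_or_pos n with h | h
    · subst h
      simp only [Nat.cast_zero, zero_add, one_pow]
      have : (0:ℝ) ≤ 2^j * (0:ℝ)^j := by positivity
      have h2 : (1:ℝ) ≤ 2^j := one_le_pow₀ (by norm_num)
      linarith
    · have h1n : (1:ℝ) ≤ (n:ℝ) := by exact_mod_cast h
      have : ((n:ℝ)+1)^j ≤ (2*(n:ℝ))^j := by
        apply pow_le_pow_left₀ (by positivity) (by linarith)
      rw [mul_pow] at this
      have : (0:ℝ) ≤ 2^j := by positivity
      nlinarith [pow_nonneg (le_trans zero_le_one h1n) j]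
  nlinarith [mul_le_mul_of_nonneg_right hb hrn]

lemma norm_cast_add_one (m : ℕ) : ‖((m:ℂ)+1)‖ = (m:ℝ)+1 := by
  rw [show ((m:ℂ)+1) = ((m+1 : ℕ):ℂ) by push_cast; ring, Complex.norm_natCast]
  push_cast; ring

lemma norm_cast_add_two (m : ℕ) : ‖((m:ℂ)+2)‖ = (m:ℝ)+2 := by
  rw [show ((m:ℂ)+2) = ((m+2 : ℕ):ℂ) by push_cast; ring, Complex.norm_natCast]
  push_cast; ring

lemma norm_cast_add_three (m : ℕ) : ‖((m:ℂ)+3)‖ = (m:ℝ)+3 := by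
  rw [show ((m:ℂ)+3) = ((m+3 : ℕ):ℂ) by push_cast; ring, Complex.norm_natCast]
  push_cast; ring

lemma hasSum_deriv (a : ℕ → ℂ) (C : ℝ) (k : ℕ)
    (hC : ∀ m, ‖a m‖ ≤ C * ((m:ℝ)+1)^k)
    (g : ℂ → ℂ)
    (hg : ∀ z ∈ ball (0:ℂ) 1, HasSum (fun m => a m * z ^ m) (g z)) :
    ∀ z ∈ ball (0:ℂ) 1, DifferentiableAt ℂ g z ∧
      HasSum (fun m : ℕ => (((m:ℂ))+1) * a (m+1) * z ^ m) (deriv g z) := by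
  have hC0 : 0 ≤ C := by
    have h := hC 0
    simp only [Nat.cast_zero, zero_add, one_pow, mul_one] at h
    exact le_trans (norm_nonneg _) h
  intro z hz
  rw [mem_ball, dist_zero_right] at hz
  set r : ℝ := (1 + ‖z‖)/2 with hrdef
  have hn0 : 0 ≤ ‖z‖ := norm_nonneg z
  have hr0 : 0 < r := by positivity
  have hzr : ‖z‖ < r := by rw [hrdef]; linarith
  have hr1 : r < 1 := by rw [hrdef]; linarith
  have hu : Summable (fun n : ℕ => (C * 2^k) * (((n:ℝ)+1)^(k+1) * r^n)) :=
    (summable_aux (k+1) hr0.le hr1).mul_left _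
  have bound : ∀ (n : ℕ) (y : ℂ), ‖y‖ ≤ r →
      ‖((n:ℂ)+1) * a (n+1) * y ^ n‖ ≤ (C * 2^k) * (((n:ℝ)+1)^(k+1) * r^n) := by
    intro n y hy
    rw [norm_mul, norm_mul, norm_pow, norm_cast_add_one]
    have h1 : ‖a (n+1)‖ ≤ C * (2^k * ((n:ℝ)+1)^k) := by
      refine (hC (n+1)).trans ?_
      have : (((n+1:ℕ):ℝ)+1)^k ≤ (2*((n:ℝ)+1))^k := by
        apply pow_le_pow_left₀ (by positivity)
        push_cast; linarith
      rw [mul_pow] at this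
      exact mul_le_mul_of_nonneg_left this hC0
    have h2 : ‖y‖^n ≤ r^n := pow_le_pow_left₀ (norm_nonneg y) hy n
    calc ((n:ℝ)+1) * ‖a (n+1)‖ * ‖y‖^n
        ≤ ((n:ℝ)+1) * (C * (2^k * ((n:ℝ)+1)^k)) * r^n := by
          apply mul_le_mul (mul_le_mul_of_nonneg_left h1 (by positivity)) h2
            (by positivity) (by positivity)
      _ = (C * 2^k) * (((n:ℝ)+1)^(k+1) * r^n) := by ring
  have key : HasDerivAt (fun y : ℂ => ∑' n : ℕ, a (n+1) * y^(n+1))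
      (∑' n : ℕ, ((n:ℂ)+1) * a (n+1) * z ^ n) z := by
    refine hasDerivAt_tsum_of_isPreconnected
      (g := fun (n : ℕ) (y : ℂ) => a (n+1) * y^(n+1))
      (g' := fun (n : ℕ) (y : ℂ) => ((n:ℂ)+1) * a (n+1) * y ^ n) hu isOpen_ball
      (convex_ball (0:ℂ) r).isPreconnected ?_ ?_ (mem_ball_self hr0) ?_
      (by rwa [mem_ball, dist_zero_right])
    · intro n y _
      have := (hasDerivAt_pow (n+1) y).const_mul (a (n+1))
      convert this using 1
      · rfl
      push_cast [Nat.add_sub_cancel]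
      ring
    · intro n y hy
      rw [mem_ball, dist_zero_right] at hy
      exact bound n y hy.le
    · refine summable_congr (f := fun _ => (0:ℂ)) (fun n => ?_) |>.mp summable_zero
      simp
  -- relate g to the series
  have hgl : ∀ y ∈ ball (0:ℂ) 1, g y = a 0 + ∑' n, a (n+1) * y^(n+1) := by
    intro y hy
    have h2 : HasSum (fun n => a (n+1) * y^(n+1)) (g y - a 0) := by
      rw [hasSum_nat_add_iff (f := fun m : ℕ => a m * y ^ m) 1]
      simpa using hg y hy
    rw [h2.tsum_eq]; ring
  have hev : g =ᶠ[nhds z] fun y => a 0 + ∑' n, a (n+1) * y^(n+1) := by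
    filter_upwards [isOpen_ball.mem_nhds (show z ∈ ball (0:ℂ) 1 by rwa [mem_ball, dist_zero_right])] with y hy
    exact hgl y hy
  have hg' : HasDerivAt g (∑' n : ℕ, ((n:ℂ)+1) * a (n+1) * z ^ n) z :=
    HasDerivAt.congr_of_eventuallyEq (key.const_add (a 0)) hev
  refine ⟨hg'.differentiableAt, ?_⟩
  rw [hg'.deriv]
  refine (Summable.hasSum ?_)
  refine Summable.of_norm (hu.of_nonneg_of_le (fun n => norm_nonneg _) ?_)
  exact fun n => bound n z hzr.le

set_option maxHeartbeats 2000000 in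
/-- Sufficient coefficient condition for membership in R_H⁰(γ,δ,λ). -/
theorem stmt7 (γ δ lam : ℝ) (hlam : 0 ≤ lam) (hlg : lam < γ) (hgd : γ ≤ δ)
    (s t : ℂ → ℂ) (a b : ℕ → ℂ)
    (ha0 : a 0 = 0) (ha1 : a 1 = 1) (hb0 : b 0 = 0) (hb1 : b 1 = 0)
    (hsrep : ∀ z ∈ ball (0 : ℂ) 1, HasSum (fun m : ℕ => a m * z ^ m) (s z))
    (htrep : ∀ z ∈ ball (0 : ℂ) 1, HasSum (fun m : ℕ => b m * z ^ m) (t z))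
    (hsum : Summable (fun m : ℕ =>
      ((m : ℝ) + 2) ^ 2 * (2 * γ + (δ - γ) * ((m : ℝ) + 1)) * (‖a (m + 2)‖ + ‖b (m + 2)‖)))
    (hle : ∑' m : ℕ,
      ((m : ℝ) + 2) ^ 2 * (2 * γ + (δ - γ) * ((m : ℝ) + 1)) * (‖a (m + 2)‖ + ‖b (m + 2)‖)
        ≤ 2 * (γ - lam)) :
    MemRH0 γ δ lam s t := by
  have hγ : 0 < γ := lt_of_le_of_lt hlam hlg
  have hδγ : 0 ≤ δ - γ := sub_nonneg.2 hgd
  have hw : ∀ n : ℕ, 0 < 2*γ + (δ-γ)*((n:ℝ)+1) := fun n => by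
    nlinarith [Nat.cast_nonneg (α := ℝ) n]
  have hwnn : ∀ n : ℕ, 0 ≤ ((n:ℝ)+2)^2 * (2*γ + (δ-γ)*((n:ℝ)+1)) * (‖a (n+2)‖ + ‖b (n+2)‖) :=
    fun n => mul_nonneg (mul_nonneg (by positivity) (hw n).le) (by positivity)
  have hterm : ∀ n : ℕ, ((n:ℝ)+2)^2 * (2*γ + (δ-γ)*((n:ℝ)+1)) * (‖a (n+2)‖ + ‖b (n+2)‖)
      ≤ 2*(γ - lam) := fun n =>
    le_trans (Summable.le_tsum hsum n (fun i _ => hwnn i)) hle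
  have hab1 : ∀ n : ℕ, ‖a (n+2)‖ + ‖b (n+2)‖ ≤ 1 := by
    intro n
    have h := hterm n
    have h4 : (4:ℝ) ≤ ((n:ℝ)+2)^2 := by nlinarith [Nat.cast_nonneg (α := ℝ) n]
    have hab0 : 0 ≤ ‖a (n+2)‖ + ‖b (n+2)‖ := by positivity
    nlinarith [hw n, mul_le_mul_of_nonneg_right h4 (mul_nonneg (hw n).le hab0)]
  have hCa : ∀ m : ℕ, ‖a m‖ ≤ 1 * ((m:ℝ)+1)^0 := by
    intro m
    simp only [pow_zero, one_mul]
    match m with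
    | 0 => simp [ha0]
    | 1 => simp [ha1]
    | (n+2) => linarith [hab1 n, norm_nonneg (b (n+2))]
  have hCb : ∀ m : ℕ, ‖b m‖ ≤ 1 * ((m:ℝ)+1)^0 := by
    intro m
    simp only [pow_zero, one_mul]
    match m with
    | 0 => simp [hb0]
    | 1 => simp [hb1]
    | (n+2) => linarith [hab1 n, norm_nonneg (a (n+2))]
  -- derivative chains for s
  have hs1 := hasSum_deriv a 1 0 hCa s hsrep
  have hs1' : ∀ z ∈ ball (0:ℂ) 1,
      HasSum (fun m : ℕ => ((m:ℂ)+1) * a (m+1) * z ^ m) (deriv s z) := fun z hz => (hs1 z hz).2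
  have hCa1 : ∀ m : ℕ, ‖(fun m : ℕ => ((m:ℂ)+1) * a (m+1)) m‖ ≤ 1 * ((m:ℝ)+1)^1 := by
    intro m
    simp only [norm_mul, norm_cast_add_one, pow_one, one_mul]
    have := hCa (m+1)
    simp only [pow_zero, one_mul] at this
    nlinarith [norm_nonneg (a (m+1)), Nat.cast_nonneg (α := ℝ) m]
  have hs2 := hasSum_deriv _ 1 1 hCa1 (deriv s) hs1'
  have hs2' : ∀ z ∈ ball (0:ℂ) 1,
      HasSum (fun m : ℕ => ((m:ℂ)+1) * (((m:ℂ)+1+1) * a (m+2)) * z ^ m)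
        (deriv (deriv s) z) := by
    intro z hz
    have := (hs2 z hz).2
    refine this.congr_fun fun m => ?_
    push_cast
    ring
  -- normalized second coefficients
  have hs2'' : ∀ z ∈ ball (0:ℂ) 1,
      HasSum (fun m : ℕ => (((m:ℂ)+1)*((m:ℂ)+2) * a (m+2)) * z ^ m)
        (deriv (deriv s) z) := by
    intro z hz
    refine ((hs2 z hz).2).congr_fun fun m => ?_
    push_cast; ring
  have hCa2 : ∀ m : ℕ, ‖(fun m : ℕ => ((m:ℂ)+1)*((m:ℂ)+2) * a (m+2)) m‖ ≤ 2 * ((m:ℝ)+1)^2 := by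
    intro m
    simp only [norm_mul, norm_cast_add_one, norm_cast_add_two]
    have := hCa (m+2)
    simp only [pow_zero, one_mul] at this
    nlinarith [norm_nonneg (a (m+2)), Nat.cast_nonneg (α := ℝ) m]
  have hs3 := hasSum_deriv _ 2 2 hCa2 (deriv (deriv s)) hs2''
  have hs3' : ∀ z ∈ ball (0:ℂ) 1,
      HasSum (fun m : ℕ => (((m:ℂ)+1)*((m:ℂ)+2)*((m:ℂ)+3) * a (m+3)) * z ^ m)
        (deriv (deriv (deriv s)) z) := by
    intro z hz
    refine ((hs3 z hz).2).congr_fun fun m => ?_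
    push_cast; ring
  -- same chain for t
  have ht1 := hasSum_deriv b 1 0 hCb t htrep
  have ht1' : ∀ z ∈ ball (0:ℂ) 1,
      HasSum (fun m : ℕ => ((m:ℂ)+1) * b (m+1) * z ^ m) (deriv t z) := fun z hz => (ht1 z hz).2
  have hCb1 : ∀ m : ℕ, ‖(fun m : ℕ => ((m:ℂ)+1) * b (m+1)) m‖ ≤ 1 * ((m:ℝ)+1)^1 := by
    intro m
    simp only [norm_mul, norm_cast_add_one, pow_one, one_mul]
    have := hCb (m+1)
    simp only [pow_zero, one_mul] at this
    nlinarith [norm_nonneg (b (m+1)), Nat.cast_nonneg (α := ℝ) m]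
  have ht2 := hasSum_deriv _ 1 1 hCb1 (deriv t) ht1'
  have ht2'' : ∀ z ∈ ball (0:ℂ) 1,
      HasSum (fun m : ℕ => (((m:ℂ)+1)*((m:ℂ)+2) * b (m+2)) * z ^ m)
        (deriv (deriv t) z) := by
    intro z hz
    refine ((ht2 z hz).2).congr_fun fun m => ?_
    push_cast; ring
  have hCb2 : ∀ m : ℕ, ‖(fun m : ℕ => ((m:ℂ)+1)*((m:ℂ)+2) * b (m+2)) m‖ ≤ 2 * ((m:ℝ)+1)^2 := by
    intro m
    simp only [norm_mul, norm_cast_add_one, norm_cast_add_two]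
    have := hCb (m+2)
    simp only [pow_zero, one_mul] at this
    nlinarith [norm_nonneg (b (m+2)), Nat.cast_nonneg (α := ℝ) m]
  have ht3 := hasSum_deriv _ 2 2 hCb2 (deriv (deriv t)) ht2''
  have ht3' : ∀ z ∈ ball (0:ℂ) 1,
      HasSum (fun m : ℕ => (((m:ℂ)+1)*((m:ℂ)+2)*((m:ℂ)+3) * b (m+3)) * z ^ m)
        (deriv (deriv (deriv t)) z) := by
    intro z hz
    refine ((ht3 z hz).2).congr_fun fun m => ?_
    push_cast; ring
  -- iterated derivatives
  have i2s : iteratedDeriv 2 s = deriv (deriv s) := by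
    rw [iteratedDeriv_succ, iteratedDeriv_one]
  have i3s : iteratedDeriv 3 s = deriv (deriv (deriv s)) := by
    rw [iteratedDeriv_succ, iteratedDeriv_succ, iteratedDeriv_one]
  have i2t : iteratedDeriv 2 t = deriv (deriv t) := by
    rw [iteratedDeriv_succ, iteratedDeriv_one]
  have i3t : iteratedDeriv 3 t = deriv (deriv (deriv t)) := by
    rw [iteratedDeriv_succ, iteratedDeriv_succ, iteratedDeriv_one]
  -- MemH0
  have h01 : (0:ℂ) ∈ ball (0:ℂ) 1 := mem_ball_self one_pos
  have hmem : MemH0 s t := by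
    have hds : DifferentiableOn ℂ s (ball 0 1) :=
      fun z hz => ((hs1 z hz).1).differentiableWithinAt
    have hdt : DifferentiableOn ℂ t (ball 0 1) :=
      fun z hz => ((ht1 z hz).1).differentiableWithinAt
    refine ⟨hds.analyticOnNhd isOpen_ball, hdt.analyticOnNhd isOpen_ball, ?_, ?_, ?_, ?_⟩
    · have h := hsrep 0 h01
      have h2 : HasSum (fun m : ℕ => a m * (0:ℂ)^m) 0 := by
        have : (fun m : ℕ => a m * (0:ℂ)^m) = fun _ => (0:ℂ) := by
          funext m; cases m <;> simp [ha0]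
        rw [this]; exact hasSum_zero
      exact (h.unique h2)
    · have h := hs1' 0 h01
      have h2 : HasSum (fun m : ℕ => ((m:ℂ)+1) * a (m+1) * (0:ℂ)^m) 1 := by
        have : (fun m : ℕ => ((m:ℂ)+1) * a (m+1) * (0:ℂ)^m)
            = fun m => if m = 0 then (1:ℂ) else 0 := by
          funext m; cases m <;> simp [ha1]
        rw [this]; exact hasSum_ite_eq 0 1
      exact (h.unique h2)
    · have h := htrep 0 h01
      have h2 : HasSum (fun m : ℕ => b m * (0:ℂ)^m) 0 := by
        have : (fun m : ℕ => b m * (0:ℂ)^m) = fun _ => (0:ℂ) := by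
          funext m; cases m <;> simp [hb0]
        rw [this]; exact hasSum_zero
      exact (h.unique h2)
    · have h := ht1' 0 h01
      have h2 : HasSum (fun m : ℕ => ((m:ℂ)+1) * b (m+1) * (0:ℂ)^m) 0 := by
        have : (fun m : ℕ => ((m:ℂ)+1) * b (m+1) * (0:ℂ)^m) = fun _ => (0:ℂ) := by
          funext m; cases m <;> simp [hb1]
        rw [this]; exact hasSum_zero
      exact (h.unique h2)
  refine ⟨hmem, ?_⟩
  intro z hz
  have hz1 : ‖z‖ < 1 := by rwa [mem_ball, dist_zero_right] at hz
  have hρ0 : (0:ℝ) ≤ ‖z‖ := norm_nonneg z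
  set ρ : ℝ := ‖z‖ with hρdef
  -- summability helper
  have master : Summable (fun m : ℕ => (6:ℝ) * (((m:ℝ)+1)^3 * ρ^m)) :=
    (summable_aux 3 hρ0 hz1).mul_left 6
  have sumhelp : ∀ p : ℕ → ℝ, (∀ m, 0 ≤ p m) → (∀ m, p m ≤ 6 * (((m:ℝ)+1)^3 * ρ^m)) →
      Summable p := fun p h1 h2 => master.of_nonneg_of_le h1 h2
  have hρpow : ∀ m : ℕ, ρ^(m+1) ≤ ρ^m :=
    fun m => pow_le_pow_of_le_one hρ0 hz1.le (Nat.le_succ m)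
  have hρle : ∀ m : ℕ, ρ^(m+1) ≤ ρ := by
    intro m
    calc ρ^(m+1) ≤ ρ^1 := pow_le_pow_of_le_one hρ0 hz1.le (by omega)
      _ = ρ := pow_one ρ
  have hαle : ∀ m : ℕ, ‖a (m+2)‖ ≤ 1 := by
    intro m; have := hCa (m+2); simpa using this
  have hβle : ∀ m : ℕ, ‖b (m+2)‖ ≤ 1 := by
    intro m; have := hCb (m+2); simpa using this
  -- the six real sequences
  set g1 : ℕ → ℝ := fun m => ((m:ℝ)+2) * ‖a (m+2)‖ * ρ^(m+1) with hg1def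
  set g2 : ℕ → ℝ := fun m => ((m:ℝ)+1)*((m:ℝ)+2) * ‖a (m+2)‖ * ρ^(m+1) with hg2def
  set g3 : ℕ → ℝ := fun m => (m:ℝ)*((m:ℝ)+1)*((m:ℝ)+2) * ‖a (m+2)‖ * ρ^(m+1) with hg3def
  set k1 : ℕ → ℝ := fun m => ((m:ℝ)+2) * ‖b (m+2)‖ * ρ^(m+1) with hk1def
  set k2 : ℕ → ℝ := fun m => ((m:ℝ)+1)*((m:ℝ)+2) * ‖b (m+2)‖ * ρ^(m+1) with hk2def
  set k3 : ℕ → ℝ := fun m => (m:ℝ)*((m:ℝ)+1)*((m:ℝ)+2) * ‖b (m+2)‖ * ρ^(m+1) with hk3def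
  have hmn : ∀ m : ℕ, (0:ℝ) ≤ (m:ℝ) := fun m => Nat.cast_nonneg m
  have sb : ∀ (c q : ℝ) (m : ℕ), 0 ≤ c → c ≤ 1 → 0 ≤ q → q ≤ 6*((m:ℝ)+1)^3 →
      q * c * ρ^(m+1) ≤ 6 * (((m:ℝ)+1)^3 * ρ^m) := by
    intro c q m hc0 hc1 hq0 hq6
    have h1 : q * c * ρ^(m+1) ≤ q * 1 * ρ^m :=
      mul_le_mul (mul_le_mul_of_nonneg_left hc1 hq0) (hρpow m) (pow_nonneg hρ0 _)
        (by linarith)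
    have h2 : q * 1 * ρ^m ≤ 6*((m:ℝ)+1)^3 * ρ^m :=
      mul_le_mul_of_nonneg_right (by linarith) (pow_nonneg hρ0 m)
    calc q * c * ρ^(m+1) ≤ 6*((m:ℝ)+1)^3 * ρ^m := le_trans h1 h2
      _ = 6 * (((m:ℝ)+1)^3 * ρ^m) := by ring
  have Sg1 : Summable g1 := by
    refine sumhelp _ (fun m => by positivity) (fun m => ?_)
    simp only [hg1def]
    exact sb _ _ m (norm_nonneg _) (hαle m) (by positivity) (by nlinarith [hmn m, sq_nonneg ((m:ℝ)), mul_nonneg (mul_nonneg (hmn m) (hmn m)) (hmn m)])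
  have Sg2 : Summable g2 := by
    refine sumhelp _ (fun m => by positivity) (fun m => ?_)
    simp only [hg2def]
    exact sb _ _ m (norm_nonneg _) (hαle m) (by positivity) (by nlinarith [hmn m, sq_nonneg ((m:ℝ)), mul_nonneg (mul_nonneg (hmn m) (hmn m)) (hmn m)])
  have Sg3 : Summable g3 := by
    refine sumhelp _ (fun m => by positivity) (fun m => ?_)
    simp only [hg3def]
    exact sb _ _ m (norm_nonneg _) (hαle m) (by positivity) (by nlinarith [hmn m, sq_nonneg ((m:ℝ)), mul_nonneg (mul_nonneg (hmn m) (hmn m)) (hmn m)])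
  have Sk1 : Summable k1 := by
    refine sumhelp _ (fun m => by positivity) (fun m => ?_)
    simp only [hk1def]
    exact sb _ _ m (norm_nonneg _) (hβle m) (by positivity) (by nlinarith [hmn m, sq_nonneg ((m:ℝ)), mul_nonneg (mul_nonneg (hmn m) (hmn m)) (hmn m)])
  have Sk2 : Summable k2 := by
    refine sumhelp _ (fun m => by positivity) (fun m => ?_)
    simp only [hk2def]
    exact sb _ _ m (norm_nonneg _) (hβle m) (by positivity) (by nlinarith [hmn m, sq_nonneg ((m:ℝ)), mul_nonneg (mul_nonneg (hmn m) (hmn m)) (hmn m)])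
  have Sk3 : Summable k3 := by
    refine sumhelp _ (fun m => by positivity) (fun m => ?_)
    simp only [hk3def]
    exact sb _ _ m (norm_nonneg _) (hβle m) (by positivity) (by nlinarith [hmn m, sq_nonneg ((m:ℝ)), mul_nonneg (mul_nonneg (hmn m) (hmn m)) (hmn m)])
  -- second-exponent helper bound
  have sb2 : ∀ (c q : ℝ) (m : ℕ), 0 ≤ c → c ≤ 1 → 0 ≤ q → q ≤ 6*((m:ℝ)+1)^3 →
      q * c * ρ^m ≤ 6 * (((m:ℝ)+1)^3 * ρ^m) := by
    intro c q m hc0 hc1 hq0 hq6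
    have h1 : q * c * ρ^m ≤ q * 1 * ρ^m :=
      mul_le_mul_of_nonneg_right (mul_le_mul_of_nonneg_left hc1 hq0) (pow_nonneg hρ0 m)
    have h2 : q * 1 * ρ^m ≤ 6*((m:ℝ)+1)^3 * ρ^m :=
      mul_le_mul_of_nonneg_right (by linarith) (pow_nonneg hρ0 m)
    calc q * c * ρ^m ≤ 6*((m:ℝ)+1)^3 * ρ^m := le_trans h1 h2
      _ = 6 * (((m:ℝ)+1)^3 * ρ^m) := by ring
  set f2 : ℕ → ℝ := fun m => ((m:ℝ)+1)*((m:ℝ)+2) * ‖a (m+2)‖ * ρ^m with hf2def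
  set f3 : ℕ → ℝ := fun m => ((m:ℝ)+1)*((m:ℝ)+2)*((m:ℝ)+3) * ‖a (m+3)‖ * ρ^m with hf3def
  set l2 : ℕ → ℝ := fun m => ((m:ℝ)+1)*((m:ℝ)+2) * ‖b (m+2)‖ * ρ^m with hl2def
  set l3 : ℕ → ℝ := fun m => ((m:ℝ)+1)*((m:ℝ)+2)*((m:ℝ)+3) * ‖b (m+3)‖ * ρ^m with hl3def
  have Sf2 : Summable f2 := by
    refine sumhelp _ (fun m => by positivity) (fun m => ?_)
    simp only [hf2def]
    exact sb2 _ _ m (norm_nonneg _) (hαle m) (by positivity)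
      (by nlinarith [hmn m, sq_nonneg ((m:ℝ)), mul_nonneg (mul_nonneg (hmn m) (hmn m)) (hmn m)])
  have Sf3 : Summable f3 := by
    refine sumhelp _ (fun m => by positivity) (fun m => ?_)
    simp only [hf3def]
    exact sb2 _ _ m (norm_nonneg _) (hαle (m+1)) (by positivity)
      (by nlinarith [hmn m, sq_nonneg ((m:ℝ)), mul_nonneg (mul_nonneg (hmn m) (hmn m)) (hmn m)])
  have Sl2 : Summable l2 := by
    refine sumhelp _ (fun m => by positivity) (fun m => ?_)
    simp only [hl2def]
    exact sb2 _ _ m (norm_nonneg _) (hβle m) (by positivity)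
      (by nlinarith [hmn m, sq_nonneg ((m:ℝ)), mul_nonneg (mul_nonneg (hmn m) (hmn m)) (hmn m)])
  have Sl3 : Summable l3 := by
    refine sumhelp _ (fun m => by positivity) (fun m => ?_)
    simp only [hl3def]
    exact sb2 _ _ m (norm_nonneg _) (hβle (m+1)) (by positivity)
      (by nlinarith [hmn m, sq_nonneg ((m:ℝ)), mul_nonneg (mul_nonneg (hmn m) (hmn m)) (hmn m)])
  -- first bounds : ‖s' - 1‖ and ‖t'‖
  have hshift1 : HasSum (fun m : ℕ => (((m+1:ℕ):ℂ)+1) * a (m+2) * z^(m+1)) (deriv s z - 1) := by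
    refine (hasSum_nat_add_iff (f := fun m : ℕ => ((m:ℂ)+1) * a (m+1) * z ^ m) 1).mpr ?_
    simpa [ha1] using hs1' z hz
  have e1 : ∀ m : ℕ, ‖(((m+1:ℕ):ℂ)+1) * a (m+2) * z^(m+1)‖ = g1 m := by
    intro m
    simp only [hg1def, norm_mul, norm_pow, norm_cast_add_one]
    push_cast
    ring
  have hbound1 : ‖deriv s z - 1‖ ≤ ∑' m, g1 m := by
    calc ‖deriv s z - 1‖ = ‖∑' m : ℕ, (((m+1:ℕ):ℂ)+1) * a (m+2) * z^(m+1)‖ := by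
          rw [hshift1.tsum_eq]
      _ ≤ ∑' m : ℕ, ‖(((m+1:ℕ):ℂ)+1) * a (m+2) * z^(m+1)‖ :=
          norm_tsum_le_tsum_norm (Sg1.congr (fun m => (e1 m).symm))
      _ = ∑' m, g1 m := tsum_congr e1
  have hshiftT1 : HasSum (fun m : ℕ => (((m+1:ℕ):ℂ)+1) * b (m+2) * z^(m+1)) (deriv t z) := by
    refine (hasSum_nat_add_iff (f := fun m : ℕ => ((m:ℂ)+1) * b (m+1) * z ^ m) 1).mpr ?_
    simpa [hb1] using ht1' z hz
  have eT1 : ∀ m : ℕ, ‖(((m+1:ℕ):ℂ)+1) * b (m+2) * z^(m+1)‖ = k1 m := by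
    intro m
    simp only [hk1def, norm_mul, norm_pow, norm_cast_add_one]
    push_cast
    ring
  have hboundT1 : ‖deriv t z‖ ≤ ∑' m, k1 m := by
    calc ‖deriv t z‖ = ‖∑' m : ℕ, (((m+1:ℕ):ℂ)+1) * b (m+2) * z^(m+1)‖ := by
          rw [hshiftT1.tsum_eq]
      _ ≤ ∑' m : ℕ, ‖(((m+1:ℕ):ℂ)+1) * b (m+2) * z^(m+1)‖ :=
          norm_tsum_le_tsum_norm (Sk1.congr (fun m => (eT1 m).symm))
      _ = ∑' m, k1 m := tsum_congr eT1
  -- second derivative bounds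
  have e2 : ∀ m : ℕ, ‖(((m:ℂ)+1)*((m:ℂ)+2) * a (m+2)) * z^m‖ = f2 m := by
    intro m
    simp only [hf2def, norm_mul, norm_pow, norm_cast_add_one, norm_cast_add_two, ← hρdef]
  have hbound2 : ρ * ‖deriv (deriv s) z‖ ≤ ∑' m, g2 m := by
    have h : ‖deriv (deriv s) z‖ ≤ ∑' m, f2 m := by
      calc ‖deriv (deriv s) z‖ = ‖∑' m : ℕ, (((m:ℂ)+1)*((m:ℂ)+2) * a (m+2)) * z^m‖ := by
            rw [(hs2'' z hz).tsum_eq]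
        _ ≤ ∑' m : ℕ, ‖(((m:ℂ)+1)*((m:ℂ)+2) * a (m+2)) * z^m‖ :=
            norm_tsum_le_tsum_norm (Sf2.congr (fun m => (e2 m).symm))
        _ = ∑' m, f2 m := tsum_congr e2
    calc ρ * ‖deriv (deriv s) z‖ ≤ ρ * ∑' m, f2 m := mul_le_mul_of_nonneg_left h hρ0
      _ = ∑' m, ρ * f2 m := tsum_mul_left.symm
      _ = ∑' m, g2 m := by
          refine tsum_congr fun m => ?_
          simp only [hf2def, hg2def]
          ring
  have eT2 : ∀ m : ℕ, ‖(((m:ℂ)+1)*((m:ℂ)+2) * b (m+2)) * z^m‖ = l2 m := by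
    intro m
    simp only [hl2def, norm_mul, norm_pow, norm_cast_add_one, norm_cast_add_two, ← hρdef]
  have hboundT2 : ρ * ‖deriv (deriv t) z‖ ≤ ∑' m, k2 m := by
    have h : ‖deriv (deriv t) z‖ ≤ ∑' m, l2 m := by
      calc ‖deriv (deriv t) z‖ = ‖∑' m : ℕ, (((m:ℂ)+1)*((m:ℂ)+2) * b (m+2)) * z^m‖ := by
            rw [(ht2'' z hz).tsum_eq]
        _ ≤ ∑' m : ℕ, ‖(((m:ℂ)+1)*((m:ℂ)+2) * b (m+2)) * z^m‖ :=
            norm_tsum_le_tsum_norm (Sl2.congr (fun m => (eT2 m).symm))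
        _ = ∑' m, l2 m := tsum_congr eT2
    calc ρ * ‖deriv (deriv t) z‖ ≤ ρ * ∑' m, l2 m := mul_le_mul_of_nonneg_left h hρ0
      _ = ∑' m, ρ * l2 m := tsum_mul_left.symm
      _ = ∑' m, k2 m := by
          refine tsum_congr fun m => ?_
          simp only [hl2def, hk2def]
          ring
  -- third derivative bounds
  have e3 : ∀ m : ℕ, ‖(((m:ℂ)+1)*((m:ℂ)+2)*((m:ℂ)+3) * a (m+3)) * z^m‖ = f3 m := by
    intro m
    simp only [hf3def, norm_mul, norm_pow, norm_cast_add_one, norm_cast_add_two,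
      norm_cast_add_three, ← hρdef]
  have hbound3 : ρ^2 * ‖deriv (deriv (deriv s)) z‖ ≤ ∑' m, g3 m := by
    have h : ‖deriv (deriv (deriv s)) z‖ ≤ ∑' m, f3 m := by
      calc ‖deriv (deriv (deriv s)) z‖
          = ‖∑' m : ℕ, (((m:ℂ)+1)*((m:ℂ)+2)*((m:ℂ)+3) * a (m+3)) * z^m‖ := by
            rw [(hs3' z hz).tsum_eq]
        _ ≤ ∑' m : ℕ, ‖(((m:ℂ)+1)*((m:ℂ)+2)*((m:ℂ)+3) * a (m+3)) * z^m‖ :=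
            norm_tsum_le_tsum_norm (Sf3.congr (fun m => (e3 m).symm))
        _ = ∑' m, f3 m := tsum_congr e3
    have hzero : g3 0 = 0 := by simp [hg3def]
    have hshift : ∀ m : ℕ, g3 (m+1) = ρ^2 * f3 m := by
      intro m
      simp only [hg3def, hf3def]
      push_cast
      ring
    calc ρ^2 * ‖deriv (deriv (deriv s)) z‖ ≤ ρ^2 * ∑' m, f3 m :=
          mul_le_mul_of_nonneg_left h (by positivity)
      _ = ∑' m, ρ^2 * f3 m := tsum_mul_left.symm
      _ = ∑' m, g3 (m+1) := (tsum_congr fun m => (hshift m).symm)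
      _ = ∑' m, g3 m := by
          rw [Summable.tsum_eq_zero_add Sg3, hzero, zero_add]
  have eT3 : ∀ m : ℕ, ‖(((m:ℂ)+1)*((m:ℂ)+2)*((m:ℂ)+3) * b (m+3)) * z^m‖ = l3 m := by
    intro m
    simp only [hl3def, norm_mul, norm_pow, norm_cast_add_one, norm_cast_add_two,
      norm_cast_add_three, ← hρdef]
  have hboundT3 : ρ^2 * ‖deriv (deriv (deriv t)) z‖ ≤ ∑' m, k3 m := by
    have h : ‖deriv (deriv (deriv t)) z‖ ≤ ∑' m, l3 m := by
      calc ‖deriv (deriv (deriv t)) z‖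
          = ‖∑' m : ℕ, (((m:ℂ)+1)*((m:ℂ)+2)*((m:ℂ)+3) * b (m+3)) * z^m‖ := by
            rw [(ht3' z hz).tsum_eq]
        _ ≤ ∑' m : ℕ, ‖(((m:ℂ)+1)*((m:ℂ)+2)*((m:ℂ)+3) * b (m+3)) * z^m‖ :=
            norm_tsum_le_tsum_norm (Sl3.congr (fun m => (eT3 m).symm))
        _ = ∑' m, l3 m := tsum_congr eT3
    have hzero : k3 0 = 0 := by simp [hk3def]
    have hshift : ∀ m : ℕ, k3 (m+1) = ρ^2 * l3 m := by
      intro m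
      simp only [hk3def, hl3def]
      push_cast
      ring
    calc ρ^2 * ‖deriv (deriv (deriv t)) z‖ ≤ ρ^2 * ∑' m, l3 m :=
          mul_le_mul_of_nonneg_left h (by positivity)
      _ = ∑' m, ρ^2 * l3 m := tsum_mul_left.symm
      _ = ∑' m, k3 (m+1) := (tsum_congr fun m => (hshift m).symm)
      _ = ∑' m, k3 m := by
          rw [Summable.tsum_eq_zero_add Sk3, hzero, zero_add]
  -- norms of scalar coefficients
  have hnγ : ‖(γ:ℂ)‖ = γ := by
    rw [Complex.norm_real, Real.norm_eq_abs, _root_.abs_of_nonneg hγ.le]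
  have hnδ : ‖(δ:ℂ)‖ = δ := by
    rw [Complex.norm_real, Real.norm_eq_abs, _root_.abs_of_nonneg (by linarith : (0:ℝ) ≤ δ)]
  have hnc : ‖((δ:ℂ)-(γ:ℂ))/2‖ = (δ-γ)/2 := by
    rw [show ((δ:ℂ)-(γ:ℂ))/2 = (((δ-γ)/2 : ℝ):ℂ) by push_cast; ring,
      Complex.norm_real, Real.norm_eq_abs, _root_.abs_of_nonneg (by linarith : (0:ℝ) ≤ (δ-γ)/2)]
  -- bound on ‖dop t z‖
  have NB : ‖dop γ δ t z‖ ≤ γ * ∑' m, k1 m + δ * ∑' m, k2 m + ((δ-γ)/2) * ∑' m, k3 m := by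
    have hdt : dop γ δ t z = (γ:ℂ) * deriv t z + (δ:ℂ) * z * (deriv (deriv t) z)
        + (((δ:ℂ)-(γ:ℂ))/2) * z^2 * (deriv (deriv (deriv t)) z) := by
      unfold dop
      rw [i2t, i3t]
    rw [hdt]
    calc ‖(γ:ℂ) * deriv t z + (δ:ℂ) * z * (deriv (deriv t) z)
          + (((δ:ℂ)-(γ:ℂ))/2) * z^2 * (deriv (deriv (deriv t)) z)‖
        ≤ ‖(γ:ℂ) * deriv t z + (δ:ℂ) * z * (deriv (deriv t) z)‖
          + ‖(((δ:ℂ)-(γ:ℂ))/2) * z^2 * (deriv (deriv (deriv t)) z)‖ := norm_add_le _ _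
      _ ≤ ‖(γ:ℂ) * deriv t z‖ + ‖(δ:ℂ) * z * (deriv (deriv t) z)‖
          + ‖(((δ:ℂ)-(γ:ℂ))/2) * z^2 * (deriv (deriv (deriv t)) z)‖ := by
            linarith [norm_add_le ((γ:ℂ) * deriv t z) ((δ:ℂ) * z * (deriv (deriv t) z))]
      _ = γ * ‖deriv t z‖ + δ * (ρ * ‖deriv (deriv t) z‖)
          + ((δ-γ)/2) * (ρ^2 * ‖deriv (deriv (deriv t)) z‖) := by
            simp only [norm_mul, norm_pow, hnγ, hnδ, hnc, ← hρdef]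
            ring
      _ ≤ γ * ∑' m, k1 m + δ * ∑' m, k2 m + ((δ-γ)/2) * ∑' m, k3 m := by
            have h1 := mul_le_mul_of_nonneg_left hboundT1 hγ.le
            have h2 := mul_le_mul_of_nonneg_left hboundT2 (by linarith : (0:ℝ) ≤ δ)
            have h3 := mul_le_mul_of_nonneg_left hboundT3 (by linarith : (0:ℝ) ≤ (δ-γ)/2)
            linarith
  -- lower bound on Re (dop s z)
  have ReS : γ - (γ * ∑' m, g1 m + δ * ∑' m, g2 m + ((δ-γ)/2) * ∑' m, g3 m)
      ≤ (dop γ δ s z).re := by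
    have hds : dop γ δ s z = (γ:ℂ) + ((γ:ℂ) * (deriv s z - 1)
        + (δ:ℂ) * z * (deriv (deriv s) z)
        + (((δ:ℂ)-(γ:ℂ))/2) * z^2 * (deriv (deriv (deriv s)) z)) := by
      unfold dop
      rw [i2s, i3s]
      ring
    set E : ℂ := (γ:ℂ) * (deriv s z - 1) + (δ:ℂ) * z * (deriv (deriv s) z)
        + (((δ:ℂ)-(γ:ℂ))/2) * z^2 * (deriv (deriv (deriv s)) z) with hEdef
    have hEnorm : ‖E‖ ≤ γ * ∑' m, g1 m + δ * ∑' m, g2 m + ((δ-γ)/2) * ∑' m, g3 m := by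
      calc ‖E‖ ≤ ‖(γ:ℂ) * (deriv s z - 1)‖ + ‖(δ:ℂ) * z * (deriv (deriv s) z)‖
            + ‖(((δ:ℂ)-(γ:ℂ))/2) * z^2 * (deriv (deriv (deriv s)) z)‖ := by
              rw [hEdef]
              refine le_trans (norm_add_le _ _) ?_
              linarith [norm_add_le ((γ:ℂ) * (deriv s z - 1))
                ((δ:ℂ) * z * (deriv (deriv s) z))]
        _ = γ * ‖deriv s z - 1‖ + δ * (ρ * ‖deriv (deriv s) z‖)
            + ((δ-γ)/2) * (ρ^2 * ‖deriv (deriv (deriv s)) z‖) := by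
              simp only [norm_mul, norm_pow, hnγ, hnδ, hnc, ← hρdef]
              ring
        _ ≤ γ * ∑' m, g1 m + δ * ∑' m, g2 m + ((δ-γ)/2) * ∑' m, g3 m := by
              have h1 := mul_le_mul_of_nonneg_left hbound1 hγ.le
              have h2 := mul_le_mul_of_nonneg_left hbound2 (by linarith : (0:ℝ) ≤ δ)
              have h3 := mul_le_mul_of_nonneg_left hbound3 (by linarith : (0:ℝ) ≤ (δ-γ)/2)
              linarith
    have hre : -‖E‖ ≤ E.re := by
      have := (abs_le.mp (Complex.abs_re_le_norm E)).1
      linarith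
    rw [hds, Complex.add_re, Complex.ofReal_re]
    linarith
  -- final combination
  have HP : HasSum (fun m => γ * g1 m + δ * g2 m + ((δ-γ)/2) * g3 m
        + (γ * k1 m + δ * k2 m + ((δ-γ)/2) * k3 m))
      ((γ * ∑' m, g1 m + δ * ∑' m, g2 m + ((δ-γ)/2) * ∑' m, g3 m)
        + (γ * ∑' m, k1 m + δ * ∑' m, k2 m + ((δ-γ)/2) * ∑' m, k3 m)) :=
    ((((Sg1.hasSum.mul_left γ).add (Sg2.hasSum.mul_left δ)).add
        (Sg3.hasSum.mul_left _)).add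
      (((Sk1.hasSum.mul_left γ).add (Sk2.hasSum.mul_left δ)).add
        (Sk3.hasSum.mul_left _)))
  have HQ : HasSum (fun m : ℕ => (ρ*(1/2)) * (((m:ℝ)+2)^2 * (2*γ + (δ-γ)*((m:ℝ)+1))
        * (‖a (m+2)‖ + ‖b (m+2)‖)))
      ((ρ*(1/2)) * ∑' m : ℕ, ((m:ℝ)+2)^2 * (2*γ + (δ-γ)*((m:ℝ)+1))
        * (‖a (m+2)‖ + ‖b (m+2)‖)) := hsum.hasSum.mul_left _
  have hPQ : ∀ m : ℕ, γ * g1 m + δ * g2 m + ((δ-γ)/2) * g3 m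
      + (γ * k1 m + δ * k2 m + ((δ-γ)/2) * k3 m)
      ≤ (ρ*(1/2)) * (((m:ℝ)+2)^2 * (2*γ + (δ-γ)*((m:ℝ)+1)) * (‖a (m+2)‖ + ‖b (m+2)‖)) := by
    intro m
    simp only [hg1def, hg2def, hg3def, hk1def, hk2def, hk3def]
    calc γ * (((m:ℝ)+2) * ‖a (m+2)‖ * ρ^(m+1))
          + δ * (((m:ℝ)+1)*((m:ℝ)+2) * ‖a (m+2)‖ * ρ^(m+1))
          + ((δ-γ)/2) * ((m:ℝ)*((m:ℝ)+1)*((m:ℝ)+2) * ‖a (m+2)‖ * ρ^(m+1))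
          + (γ * (((m:ℝ)+2) * ‖b (m+2)‖ * ρ^(m+1))
          + δ * (((m:ℝ)+1)*((m:ℝ)+2) * ‖b (m+2)‖ * ρ^(m+1))
          + ((δ-γ)/2) * ((m:ℝ)*((m:ℝ)+1)*((m:ℝ)+2) * ‖b (m+2)‖ * ρ^(m+1)))
        = (((m:ℝ)+2)^2 * (2*γ + (δ-γ)*((m:ℝ)+1)) * (‖a (m+2)‖ + ‖b (m+2)‖))
            * (ρ^(m+1) * (1/2)) := by ring
      _ ≤ (((m:ℝ)+2)^2 * (2*γ + (δ-γ)*((m:ℝ)+1)) * (‖a (m+2)‖ + ‖b (m+2)‖))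
            * (ρ * (1/2)) := by
          refine mul_le_mul_of_nonneg_left ?_ (hwnn m)
          exact mul_le_mul_of_nonneg_right (hρle m) (by norm_num)
      _ = (ρ*(1/2)) * (((m:ℝ)+2)^2 * (2*γ + (δ-γ)*((m:ℝ)+1))
            * (‖a (m+2)‖ + ‖b (m+2)‖)) := by ring
  have hmain : (γ * ∑' m, g1 m + δ * ∑' m, g2 m + ((δ-γ)/2) * ∑' m, g3 m)
      + (γ * ∑' m, k1 m + δ * ∑' m, k2 m + ((δ-γ)/2) * ∑' m, k3 m)
      ≤ ρ * (γ - lam) := by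
    have h := hasSum_le hPQ HP HQ
    have h2 : (ρ*(1/2)) * ∑' m : ℕ, ((m:ℝ)+2)^2 * (2*γ + (δ-γ)*((m:ℝ)+1))
        * (‖a (m+2)‖ + ‖b (m+2)‖) ≤ (ρ*(1/2)) * (2*(γ-lam)) :=
      mul_le_mul_of_nonneg_left hle (by positivity)
    calc _ ≤ (ρ*(1/2)) * ∑' m : ℕ, ((m:ℝ)+2)^2 * (2*γ + (δ-γ)*((m:ℝ)+1))
          * (‖a (m+2)‖ + ‖b (m+2)‖) := h
      _ ≤ (ρ*(1/2)) * (2*(γ-lam)) := h2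
      _ = ρ * (γ - lam) := by ring
  have hρlt : ρ * (γ - lam) < γ - lam := by nlinarith
  rw [Complex.sub_re, Complex.ofReal_re]
  linarith
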